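/- arXiv:1809.01457 — 3 statements merged into one kernel-verified Lean document; each statement's English description precedes it below -/
import Mathlib

section
/- Let 𝕂 be the field of generalised Puiseux series in two variables t, u with real coefficients (the Hahn series field over ℝ with value group Lex ℝ²), ordered so that a nonzero series is positive iff its leading coefficient is positive, with val₂ : 𝕂 → T₂ ∪ {∞} sending a nonzero series to the lexicographic minimum of its support and 0 to ∞, applied coordinatewise. If K is a convex set contained in the nonnegative orthant 𝕂_{≥0}^d, then val₂(K) is a rank two tropically convex subset of (T₂ ∪ {∞})^d, and conversely every rank two tropically convex set arises in this way. Furthermore, if K is an ordinary polytope then val₂(K) is a rank two tropical polytope, and conversely every rank two tropical polytope is the image under val₂ of an ordinary polytope. -/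
noncomputable section
open scoped Classical

/-- The value group `ℝ²` with the lexicographic ordering. -/
abbrev Gamma2 := Lex (ℝ × ℝ)

/-- The field `𝕂` of generalised Puiseux series in two variables: Hahn series over `ℝ`
with value group `Lex ℝ²`. -/
abbrev K2 := HahnSeries Gamma2 ℝ

/-- A nonzero series is positive iff its leading coefficient is positive. -/
def posK (x : K2) : Prop := x ≠ 0 ∧ 0 < x.coeff x.order

/-- Nonnegative elements of `𝕂`. -/
def nnegK (x : K2) : Prop := x = 0 ∨ posK x

/-- The rank two valuation: the lexicographic minimum of the support, and `∞` on `0`. -/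
def val2K (x : K2) : WithTop Gamma2 := if x = 0 then ⊤ else ↑x.order

/-- Coordinatewise rank two valuation on `𝕂^d`. -/
def val2vec {d : ℕ} (x : Fin d → K2) : Fin d → WithTop Gamma2 := fun i => val2K (x i)

/-- An ordinary cone in `𝕂^d`. -/
def IsConeK {d : ℕ} (K : Set (Fin d → K2)) : Prop :=
  K.Nonempty ∧ ∀ p ∈ K, ∀ q ∈ K, ∀ l m : K2, nnegK l → nnegK m → l • p + m • q ∈ K

/-- A polyhedral (finitely generated) cone in `𝕂^d`. -/
def IsPolyConeK {d : ℕ} (K : Set (Fin d → K2)) : Prop :=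
  ∃ (n : ℕ) (v : Fin n → Fin d → K2),
    K = {x | ∃ l : Fin n → K2, (∀ j, nnegK (l j)) ∧ x = ∑ j, l j • v j}

/-- The tropical combination `min(λ+p, μ+q)` in `(T₂ ∪ {∞})^d`. -/
def tropComb2 {d : ℕ} (l m : WithTop Gamma2) (p q : Fin d → WithTop Gamma2) :
    Fin d → WithTop Gamma2 :=
  fun i => min (l + p i) (m + q i)

/-- A rank two tropical cone in `(T₂ ∪ {∞})^d`. -/
def IsTropCone2 {d : ℕ} (M : Set (Fin d → WithTop Gamma2)) : Prop :=
  M.Nonempty ∧ ∀ p ∈ M, ∀ q ∈ M, ∀ l m : WithTop Gamma2, tropComb2 l m p q ∈ M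

/-- A polyhedral (finitely generated) rank two tropical cone. -/
def IsPolyTropCone2 {d : ℕ} (M : Set (Fin d → WithTop Gamma2)) : Prop :=
  ∃ (n : ℕ) (v : Fin n → Fin d → WithTop Gamma2),
    M = {x | ∃ lam : Fin n → WithTop Gamma2,
      x = fun i => Finset.univ.inf fun j => lam j + v j i}

/-- An (ordinary) convex subset of `𝕂^d`. -/
def IsConvexK {d : ℕ} (K : Set (Fin d → K2)) : Prop :=
  ∀ p ∈ K, ∀ q ∈ K, ∀ l m : K2, nnegK l → nnegK m → l + m = 1 → l • p + m • q ∈ K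

/-- An ordinary polytope in `𝕂^d`: the convex combinations of finitely many points. -/
def IsPolytopeK {d : ℕ} (K : Set (Fin d → K2)) : Prop :=
  ∃ (n : ℕ) (v : Fin n → Fin d → K2),
    K = {x | ∃ l : Fin n → K2, (∀ j, nnegK (l j)) ∧ (∑ j, l j) = 1 ∧
      x = ∑ j, l j • v j}

/-- A rank two tropically convex subset of `(T₂ ∪ {∞})^d`. -/
def IsTropConvex2 {d : ℕ} (M : Set (Fin d → WithTop Gamma2)) : Prop :=
  ∀ p ∈ M, ∀ q ∈ M, ∀ l m : WithTop Gamma2,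
    min l m = ((0 : Gamma2) : WithTop Gamma2) → tropComb2 l m p q ∈ M

/-- A rank two tropical polytope: the tropical convex combinations of finitely many
points. -/
def IsTropPolytope2 {d : ℕ} (M : Set (Fin d → WithTop Gamma2)) : Prop :=
  ∃ (n : ℕ) (v : Fin n → Fin d → WithTop Gamma2),
    M = {x | ∃ lam : Fin n → WithTop Gamma2,
      (Finset.univ.inf lam = ((0 : Gamma2) : WithTop Gamma2)) ∧
      x = fun i => Finset.univ.inf fun j => lam j + v j i}

/-!
Nonnegative series do not cancel: on the ordered ring `Lex 𝕂` the valuation identifies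
archimedean classes with `T₂ ∪ {∞}` order-isomorphically, and the archimedean class of a sum
of nonnegative elements is the minimum of theirs. Hence `val₂` maps nonnegative combinations
to tropical combinations. Conversely, tropical weights `λ` with `min λ = 0` are the valuations
of the convex weights `t^{λ_j} / ∑ₖ t^{λ_k}`, and `a ↦ t^a` is a nonnegative section of `val₂`.
-/

theorem ArchimedeanClass.mk_add_of_nonneg {M : Type*} [AddCommGroup M] [LinearOrder M]
    [IsOrderedAddMonoid M] {a b : M} (ha : 0 ≤ a) (hb : 0 ≤ b) :
    mk (a + b) = min (mk a) (mk b) :=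
  le_antisymm
    (le_min (mk_antitoneOn ha (add_nonneg ha hb) (le_add_of_nonneg_right hb))
      (mk_antitoneOn hb (add_nonneg ha hb) (le_add_of_nonneg_left ha)))
    (min_le_mk_add a b)

theorem HahnSeries.orderTop_add_of_nonneg {Γ R : Type*} [LinearOrder Γ] [LinearOrder R]
    [AddCommGroup R] [IsOrderedAddMonoid R] [Archimedean R] [Nontrivial R]
    {x y : Lex (HahnSeries Γ R)} (hx : 0 ≤ x) (hy : 0 ≤ y) :
    (ofLex (x + y)).orderTop = min (ofLex x).orderTop (ofLex y).orderTop := by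
  simp only [← archimedeanClassOrderIsoWithTop_apply, ArchimedeanClass.mk_add_of_nonneg hx hy,
    (archimedeanClassOrderIsoWithTop Γ R).monotone.map_min]

theorem nnegK_iff {x : K2} : nnegK x ↔ 0 ≤ toLex x := by
  rw [← HahnSeries.leadingCoeff_nonneg_iff, ofLex_toLex, HahnSeries.leadingCoeff_eq, nnegK, posK]
  rcases eq_or_ne x 0 with rfl | hx
  · simp
  · simp [hx, le_iff_lt_or_eq, eq_comm (a := (0 : ℝ)), HahnSeries.coeff_order_eq_zero]

theorem val2K_eq_addVal : val2K = HahnSeries.addVal Gamma2 ℝ := by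
  funext x
  rcases eq_or_ne x 0 with rfl | hx
  · simp [val2K]
  · rw [HahnSeries.addVal_apply_of_ne hx, val2K, if_neg hx]

theorem nnegK_add {x y : K2} (hx : nnegK x) (hy : nnegK y) : nnegK (x + y) :=
  nnegK_iff.2 (add_nonneg (nnegK_iff.1 hx) (nnegK_iff.1 hy))

theorem nnegK_mul {x y : K2} (hx : nnegK x) (hy : nnegK y) : nnegK (x * y) :=
  nnegK_iff.2 (mul_nonneg (nnegK_iff.1 hx) (nnegK_iff.1 hy))

theorem nnegK_inv {x : K2} (hx : nnegK x) : nnegK x⁻¹ := by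
  rcases eq_or_ne x 0 with rfl | hx0
  · simpa using hx
  have h : 0 < toLex x * toLex x⁻¹ := by
    change 0 < toLex (x * x⁻¹)
    rw [mul_inv_cancel₀ hx0]
    exact zero_lt_one
  exact nnegK_iff.2 (pos_of_mul_pos_right h (nnegK_iff.1 hx)).le

theorem nnegK_sum {ι : Type*} (s : Finset ι) {f : ι → K2} (hf : ∀ j ∈ s, nnegK (f j)) :
    nnegK (∑ j ∈ s, f j) :=
  nnegK_iff.2 (Finset.sum_nonneg fun j hj => nnegK_iff.1 (hf j hj))

theorem val2K_one : val2K 1 = ((0 : Gamma2) : WithTop Gamma2) := by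
  rw [val2K_eq_addVal, AddValuation.map_one]; rfl

theorem val2K_mul (x y : K2) : val2K (x * y) = val2K x + val2K y := by
  rw [val2K_eq_addVal, AddValuation.map_mul]

theorem val2K_inv (x : K2) : val2K x⁻¹ = -val2K x := by
  rw [val2K_eq_addVal, AddValuation.map_inv]

theorem val2K_add_of_nnegK {x y : K2} (hx : nnegK x) (hy : nnegK y) :
    val2K (x + y) = min (val2K x) (val2K y) := by
  simp only [val2K_eq_addVal, HahnSeries.addVal_apply]
  exact HahnSeries.orderTop_add_of_nonneg (nnegK_iff.1 hx) (nnegK_iff.1 hy)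

theorem val2K_sum_of_nnegK {ι : Type*} (s : Finset ι) {f : ι → K2}
    (hf : ∀ j ∈ s, nnegK (f j)) :
    val2K (∑ j ∈ s, f j) = s.inf fun j => val2K (f j) := by
  induction s using Finset.cons_induction with
  | empty => simp [val2K]
  | cons a s _ ih =>
    rw [Finset.forall_mem_cons] at hf
    rw [Finset.sum_cons, Finset.inf_cons, val2K_add_of_nnegK hf.1 (nnegK_sum s hf.2), ih hf.2]

/-- The monomial `t^a`, with `t^∞ = 0`. -/
def tPow : WithTop Gamma2 → K2
  | ⊤ => 0
  | (γ : Gamma2) => HahnSeries.single γ 1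

theorem nnegK_tPow (a : WithTop Gamma2) : nnegK (tPow a) := by
  cases a with
  | top => exact Or.inl rfl
  | coe γ => exact nnegK_iff.2 (HahnSeries.leadingCoeff_nonneg_iff.1 (by simp [tPow]))

theorem val2K_tPow (a : WithTop Gamma2) : val2K (tPow a) = a := by
  cases a with
  | top => simp [tPow, val2K]
  | coe γ => simp [tPow, val2K_eq_addVal]

theorem val2vec_tPow {d : ℕ} (p : Fin d → WithTop Gamma2) :
    val2vec (fun i => tPow (p i)) = p :=
  funext fun i => val2K_tPow (p i)

theorem exists_nnegK_sum_eq_one_val2K {ι : Type*} [Fintype ι] {lam : ι → WithTop Gamma2}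
    (hlam : Finset.univ.inf lam = ((0 : Gamma2) : WithTop Gamma2)) :
    ∃ l : ι → K2, (∀ j, nnegK (l j)) ∧ ∑ j, l j = 1 ∧ ∀ j, val2K (l j) = lam j := by
  set s := ∑ j, tPow (lam j)
  have hs_val : val2K s = ((0 : Gamma2) : WithTop Gamma2) := by
    rw [val2K_sum_of_nnegK _ fun j _ => nnegK_tPow _]
    simpa only [val2K_tPow] using hlam
  have hs_ne : s ≠ 0 := fun h => by simp [h, val2K] at hs_val
  have hs_inv_val : val2K s⁻¹ = ((0 : Gamma2) : WithTop Gamma2) := by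
    rw [val2K_inv, hs_val, WithTop.coe_zero, neg_zero]
  have hs_inv_nneg : nnegK s⁻¹ := nnegK_inv (nnegK_sum _ fun j _ => nnegK_tPow _)
  refine ⟨fun j => tPow (lam j) * s⁻¹, fun j => nnegK_mul (nnegK_tPow _) hs_inv_nneg,
    by rw [← Finset.sum_mul, mul_inv_cancel₀ hs_ne], fun j => ?_⟩
  rw [val2K_mul, val2K_tPow, hs_inv_val, WithTop.coe_zero, add_zero]

theorem val2vec_smul_add_smul {d : ℕ} {l m : K2} {x y : Fin d → K2} (hl : nnegK l)
    (hm : nnegK m) (hx : ∀ i, nnegK (x i)) (hy : ∀ i, nnegK (y i)) :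
    val2vec (l • x + m • y) = tropComb2 (val2K l) (val2K m) (val2vec x) (val2vec y) := by
  funext i
  change val2K (l * x i + m * y i) = _
  rw [val2K_add_of_nnegK (nnegK_mul hl (hx i)) (nnegK_mul hm (hy i)), val2K_mul, val2K_mul]
  rfl

theorem val2vec_sum_smul {d n : ℕ} {l : Fin n → K2} {v : Fin n → Fin d → K2}
    (hl : ∀ j, nnegK (l j)) (hv : ∀ j i, nnegK (v j i)) :
    val2vec (∑ j, l j • v j) =
      fun i => Finset.univ.inf fun j => val2K (l j) + val2vec (v j) i := by
  funext i
  change val2K ((∑ j, l j • v j) i) = _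
  rw [Finset.sum_apply]
  simp only [Pi.smul_apply, smul_eq_mul]
  rw [val2K_sum_of_nnegK _ fun j _ => nnegK_mul (hl j) (hv j i)]
  simp only [val2K_mul, val2vec]

theorem nnegK_sum_smul_apply {d n : ℕ} {l : Fin n → K2} {v : Fin n → Fin d → K2}
    (hl : ∀ j, nnegK (l j)) (hv : ∀ j i, nnegK (v j i)) (i : Fin d) :
    nnegK ((∑ j, l j • v j) i) := by
  rw [Finset.sum_apply]
  exact nnegK_sum _ fun j _ => nnegK_mul (hl j) (hv j i)

def polytopeK {d n : ℕ} (v : Fin n → Fin d → K2) : Set (Fin d → K2) :=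
  {x | ∃ l : Fin n → K2, (∀ j, nnegK (l j)) ∧ (∑ j, l j) = 1 ∧ x = ∑ j, l j • v j}

def tropPolytope2 {d n : ℕ} (w : Fin n → Fin d → WithTop Gamma2) :
    Set (Fin d → WithTop Gamma2) :=
  {x | ∃ lam : Fin n → WithTop Gamma2,
    (Finset.univ.inf lam = ((0 : Gamma2) : WithTop Gamma2)) ∧
    x = fun i => Finset.univ.inf fun j => lam j + w j i}

theorem vertex_mem_polytopeK {d n : ℕ} (v : Fin n → Fin d → K2) (j : Fin n) :
    v j ∈ polytopeK v := by
  have hsum : ∑ k, (Pi.single j 1 : Fin n → K2) k • v k = v j := by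
    refine (Finset.sum_eq_single j (fun k _ hk => ?_) (by simp)).trans (by simp)
    rw [Pi.single_eq_of_ne hk]
    exact zero_smul K2 (v k)
  refine ⟨Pi.single j 1, fun k => ?_, by simp, hsum.symm⟩
  by_cases h : k = j
  · subst h; rw [Pi.single_eq_same]; exact nnegK_iff.2 zero_le_one
  · rw [Pi.single_eq_of_ne h]; exact Or.inl rfl

theorem val2vec_image_polytopeK {d n : ℕ} {v : Fin n → Fin d → K2}
    (hv : ∀ j i, nnegK (v j i)) :
    val2vec '' polytopeK v = tropPolytope2 fun j => val2vec (v j) := by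
  ext p
  constructor
  · rintro ⟨x, ⟨l, hl, hsum, rfl⟩, rfl⟩
    refine ⟨fun j => val2K (l j), ?_, val2vec_sum_smul hl hv⟩
    rw [← val2K_sum_of_nnegK _ fun j _ => hl j, hsum, val2K_one]
  · rintro ⟨lam, hlam, rfl⟩
    obtain ⟨l, hl, hsum, hval⟩ := exists_nnegK_sum_eq_one_val2K hlam
    exact ⟨_, ⟨l, hl, hsum, rfl⟩, by simp only [val2vec_sum_smul hl hv, hval]⟩

theorem exists_nnegK_add_eq_one_val2K {lam mu : WithTop Gamma2}
    (h : min lam mu = ((0 : Gamma2) : WithTop Gamma2)) :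
    ∃ l m : K2, nnegK l ∧ nnegK m ∧ l + m = 1 ∧ val2K l = lam ∧ val2K m = mu := by
  obtain ⟨l, hl, hsum, hval⟩ := exists_nnegK_sum_eq_one_val2K (lam := ![lam, mu])
    (by simpa [Fin.univ_succ] using h)
  exact ⟨l 0, l 1, hl 0, hl 1, by simpa [Fin.sum_univ_two] using hsum, hval 0, hval 1⟩

theorem IsConvexK.isTropConvex2_image {d : ℕ} {K : Set (Fin d → K2)} (hconv : IsConvexK K)
    (hK : ∀ x ∈ K, ∀ i, nnegK (x i)) : IsTropConvex2 (val2vec '' K) := by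
  rintro _ ⟨x, hx, rfl⟩ _ ⟨y, hy, rfl⟩ lam mu hmin
  obtain ⟨l, m, hl, hm, hsum, rfl, rfl⟩ := exists_nnegK_add_eq_one_val2K hmin
  exact ⟨l • x + m • y, hconv x hx y hy l m hl hm hsum,
    val2vec_smul_add_smul hl hm (hK x hx) (hK y hy)⟩

theorem IsTropConvex2.exists_isConvexK_image_eq {d : ℕ} {M : Set (Fin d → WithTop Gamma2)}
    (hM : IsTropConvex2 M) :
    ∃ K : Set (Fin d → K2), (∀ x ∈ K, ∀ i, nnegK (x i)) ∧ IsConvexK K ∧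
      val2vec '' K = M := by
  refine ⟨{x | (∀ i, nnegK (x i)) ∧ val2vec x ∈ M}, fun x hx => hx.1, ?_, ?_⟩
  · rintro p ⟨hp, hpM⟩ q ⟨hq, hqM⟩ l m hl hm hsum
    refine ⟨fun i => nnegK_add (nnegK_mul hl (hp i)) (nnegK_mul hm (hq i)), ?_⟩
    rw [val2vec_smul_add_smul hl hm hp hq]
    exact hM _ hpM _ hqM _ _ (by rw [← val2K_add_of_nnegK hl hm, hsum, val2K_one])
  · refine subset_antisymm (Set.image_subset_iff.2 fun x hx => hx.2) fun p hp => ?_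
    exact ⟨fun i => tPow (p i), ⟨fun i => nnegK_tPow _, by rwa [val2vec_tPow]⟩,
      val2vec_tPow p⟩

theorem IsPolytopeK.isTropPolytope2_image {d : ℕ} {K : Set (Fin d → K2)}
    (hpoly : IsPolytopeK K) (hK : ∀ x ∈ K, ∀ i, nnegK (x i)) :
    IsTropPolytope2 (val2vec '' K) := by
  obtain ⟨n, v, rfl⟩ := hpoly
  exact ⟨n, _, val2vec_image_polytopeK fun j => hK (v j) (vertex_mem_polytopeK v j)⟩

theorem IsTropPolytope2.exists_isPolytopeK_image_eq {d : ℕ} {M : Set (Fin d → WithTop Gamma2)}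
    (hM : IsTropPolytope2 M) :
    ∃ K : Set (Fin d → K2), (∀ x ∈ K, ∀ i, nnegK (x i)) ∧ IsPolytopeK K ∧
      val2vec '' K = M := by
  obtain ⟨n, w, rfl⟩ := hM
  have hv : ∀ j i, nnegK (tPow (w j i)) := fun j i => nnegK_tPow _
  refine ⟨polytopeK fun j i => tPow (w j i), ?_, ⟨n, _, rfl⟩, ?_⟩
  · rintro x ⟨l, hl, -, rfl⟩
    exact nnegK_sum_smul_apply hl hv
  · rw [val2vec_image_polytopeK hv]
    simp only [val2vec_tPow]
    rfl

/-- If `K ⊆ 𝕂_{≥0}^d` is convex then `val₂(K)` is rank two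
tropically convex, and conversely every rank two tropically convex set arises this
way; moreover ordinary polytopes tropicalise to rank two tropical polytopes, and
every rank two tropical polytope is the image of an ordinary polytope. -/
theorem tropicalisation_of_convex_sets (d : ℕ) :
    (∀ K : Set (Fin d → K2), (∀ x ∈ K, ∀ i, nnegK (x i)) → IsConvexK K →
      IsTropConvex2 (val2vec '' K)) ∧
    (∀ M : Set (Fin d → WithTop Gamma2), IsTropConvex2 M →
      ∃ K : Set (Fin d → K2), (∀ x ∈ K, ∀ i, nnegK (x i)) ∧ IsConvexK K ∧
        val2vec '' K = M) ∧
    (∀ K : Set (Fin d → K2), (∀ x ∈ K, ∀ i, nnegK (x i)) → IsPolytopeK K →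
      IsTropPolytope2 (val2vec '' K)) ∧
    (∀ M : Set (Fin d → WithTop Gamma2), IsTropPolytope2 M →
      ∃ K : Set (Fin d → K2), (∀ x ∈ K, ∀ i, nnegK (x i)) ∧ IsPolytopeK K ∧
        val2vec '' K = M) :=
  ⟨fun _ hK hconv => hconv.isTropConvex2_image hK,
    fun _ hM => hM.exists_isConvexK_image_eq,
    fun _ hK hpoly => hpoly.isTropPolytope2_image hK,
    fun _ hM => hM.exists_isPolytopeK_image_eq⟩
end
end

section
/- Fix generators v^(1), …, v^(n) ∈ (T₂ ∪ {∞})^d and let S be a bipartite graph on the node set [d] ⊔ [n]. Then the covector cell C_S = {p ∈ (T₂)^d : S ⊆ S_p} is rank two tropically convex: for all p, q ∈ C_S and all λ, μ ∈ T₂ ∪ {∞} with min(λ, μ) = (0,0), the point min(λ+p, μ+q) (coordinatewise lexicographic minimum) lies in C_S. -/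
noncomputable section
open scoped Classical

/-- The rank two tropical semifield `T₂`: `ℝ²` with the lexicographic order. -/
abbrev T2 := Lex (ℝ × ℝ)

/-- `T₂ ∪ {∞}`. -/
abbrev T2i := WithTop T2

variable {d n : ℕ}

/-- The tropical linear combination `min_j (λ_j + v^(j))` of generators. -/
def tropCombN (v : Fin n → Fin d → T2i) (lam : Fin n → T2i) : Fin d → T2i :=
  fun i => Finset.univ.inf fun j => lam j + v j i

/-- The rank two tropical cone generated by `v^(1), …, v^(n)`. -/
def genCone (v : Fin n → Fin d → T2i) : Set (Fin d → T2i) :=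
  {x | ∃ lam : Fin n → T2i, x = tropCombN v lam}

/-- The `i`-th sector of `u`:
`Z_i(u) = ⋂_{k, u_k ≠ ∞} {p : p_k − p_i ≤_lex u_k − u_i}`. -/
def sector (u : Fin d → T2i) (i : Fin d) : Set (Fin d → T2) :=
  {p | ∀ k, (↑(p k - p i) + u i : T2i) ≤ u k}

/-- The covector `S_p` of `p` w.r.t. generators `v`: the bipartite graph on
`[d] ⊔ [n]` with `(i,j) ∈ S_p` iff `v^(j)_i ≠ ∞` and `p ∈ Z_i(v^(j))`. -/
def covector (v : Fin n → Fin d → T2i) (p : Fin d → T2) : Set (Fin d × Fin n) :=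
  {ij | v ij.2 ij.1 ≠ ⊤ ∧ p ∈ sector (v ij.2) ij.1}

/-- The covector cell `C_S = {p : S ⊆ S_p}`. -/
def cellC (v : Fin n → Fin d → T2i) (S : Set (Fin d × Fin n)) : Set (Fin d → T2) :=
  {p | S ⊆ covector v p}

/-- `S` is a covector w.r.t. `v`. -/
def IsCovector (v : Fin n → Fin d → T2i) (S : Set (Fin d × Fin n)) : Prop :=
  ∃ p : Fin d → T2, S = covector v p

/-- A bipartite graph on `[d] ⊔ [n]` is bounded if no node of `[d]` is isolated. -/
def BoundedGraph (S : Set (Fin d × Fin n)) : Prop := ∀ i, ∃ j, (i, j) ∈ S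

/-- No node of `[n]` is isolated. -/
def NoIsolatedGen (S : Set (Fin d × Fin n)) : Prop := ∀ j, ∃ i, (i, j) ∈ S

-- faces of covector cells
def faceC (v : Fin n → Fin d → T2i) (S : Set (Fin d × Fin n))
    (E : Set (Fin d × Fin n × Fin d)) : Set (Fin d → T2) :=
  cellC v S ∩ {p | ∀ e ∈ E, (↑(p e.2.2 - p e.1) + v e.2.1 e.1 : T2i) = v e.2.1 e.2.2}

def IsFaceC (v : Fin n → Fin d → T2i) (S : Set (Fin d × Fin n))
    (F : Set (Fin d → T2)) : Prop :=
  ∃ E : Set (Fin d × Fin n × Fin d),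
    (∀ e ∈ E, (e.1, e.2.1) ∈ S ∧ v e.2.1 e.2.2 ≠ ⊤) ∧ F = faceC v S E

def relintC (v : Fin n → Fin d → T2i) (S : Set (Fin d × Fin n)) : Set (Fin d → T2) :=
  {p | p ∈ cellC v S ∧ ∀ F, IsFaceC v S F → F ≠ cellC v S → p ∉ F}

/-- The pairing `⟨s,p⟩ = ∑ i, s i • p i` between `ℤ^d` and `(T₂)^d`. -/
def pairE (s : Fin d → ℤ) (p : Fin d → T2) : T2 := ∑ i, s i • p i

/-- A lex-polyhedron in `(T₂)^d`. -/
def IsLexPolyE (P : Set (Fin d → T2)) : Prop :=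
  ∃ (k : ℕ) (s : Fin k → Fin d → ℤ) (q : Fin k → T2),
    P = {p | ∀ i, pairE (s i) p ≤ q i}

-- rank one versions
def sector1 (u : Fin d → WithTop ℝ) (i : Fin d) : Set (Fin d → ℝ) :=
  {p | ∀ k, (↑(p k - p i) + u i : WithTop ℝ) ≤ u k}

def covector1 (v : Fin n → Fin d → WithTop ℝ) (p : Fin d → ℝ) :
    Set (Fin d × Fin n) :=
  {ij | v ij.2 ij.1 ≠ ⊤ ∧ p ∈ sector1 (v ij.2) ij.1}

def cell1C (v : Fin n → Fin d → WithTop ℝ) (S : Set (Fin d × Fin n)) :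
    Set (Fin d → ℝ) :=
  {p | S ⊆ covector1 v p}

def IsCovector1 (v : Fin n → Fin d → WithTop ℝ) (S : Set (Fin d × Fin n)) : Prop :=
  ∃ p : Fin d → ℝ, S = covector1 v p

/-- Projection `π_{u*}` onto first coordinates (sending `∞` to `∞`). -/
def projU2 (x : T2i) : WithTop ℝ := WithTop.map (fun a => (ofLex a).1) x

/-- Projection `π_{t*}` onto second coordinates (sending `∞` to `∞`). -/
def projT2 (x : T2i) : WithTop ℝ := WithTop.map (fun a => (ofLex a).2) x

def genU (v : Fin n → Fin d → T2i) : Fin n → Fin d → WithTop ℝ :=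
  fun j i => projU2 (v j i)

/-- The generators `V_T` of `K_T`. -/
def genRestrict (v : Fin n → Fin d → T2i) (T : Set (Fin d × Fin n)) :
    Fin n → Fin d → T2i :=
  fun j i => if (i, j) ∈ T then v j i else ⊤

def genTB (v : Fin n → Fin d → T2i) (T : Set (Fin d × Fin n)) :
    Fin n → Fin d → WithTop ℝ :=
  fun j i => projT2 (genRestrict v T j i)

/-- The identification `(ℝ²)^d ≅ ℝ_t^d × ℝ_u^d = ℝ^{2d}`. -/
def embed2 (p : Fin d → T2) : (Fin d → ℝ) × (Fin d → ℝ) :=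
  (fun i => (ofLex (p i)).1, fun i => (ofLex (p i)).2)

/-- The finite part of the tropical cone generated by `v`, as a subset of `(T₂)^d`. -/
def genConeFin (v : Fin n → Fin d → T2i) : Set (Fin d → T2) :=
  {p | (fun i => (↑(p i) : T2i)) ∈ genCone v}

/-! Clearing the difference `p k - p i` turns each sector into an intersection of half-spaces
`p k + u i ≤ p i + u k` in `T₂ ∪ {∞}`. Both sides are tropically linear in `p`, and `+` is
monotone and distributes over `min`, so every sector, hence every covector cell (an
intersection of sectors), is closed under `min (l + p) (m + q)`. -/

theorem WithTop.coe_sub_add_le_iff {G : Type*} [AddCommGroup G] [PartialOrder G]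
    [IsOrderedAddMonoid G] (a b : G) (u w : WithTop G) :
    ((a - b : G) : WithTop G) + u ≤ w ↔ (a : WithTop G) + u ≤ b + w := by
  have hab : (a : WithTop G) = b + ↑(a - b) := by
    rw [← WithTop.coe_add, add_sub_cancel]
  rw [hab, add_assoc, WithTop.add_le_add_iff_left WithTop.coe_ne_top]

theorem mem_sector_iff (u : Fin d → T2i) (i : Fin d) (p : Fin d → T2) :
    p ∈ sector u i ↔ ∀ k, (p k : T2i) + u i ≤ p i + u k :=
  forall_congr' fun k => WithTop.coe_sub_add_le_iff (p k) (p i) (u i) (u k)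

theorem min_add_mem_sector {u : Fin d → T2i} {i : Fin d} {p q : Fin d → T2}
    (hp : p ∈ sector u i) (hq : q ∈ sector u i) (l m : T2i) {z : Fin d → T2}
    (hz : ∀ k, (z k : T2i) = min (l + p k) (m + q k)) : z ∈ sector u i := by
  rw [mem_sector_iff] at hp hq ⊢
  intro k
  calc (z k : T2i) + u i = min (l + (p k + u i)) (m + (q k + u i)) := by
        rw [hz, ← min_add_add_right, add_assoc, add_assoc]
    _ ≤ min (l + (p i + u k)) (m + (q i + u k)) :=
        min_le_min (add_le_add_right (hp k) l) (add_le_add_right (hq k) m)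
    _ = z i + u k := by
        rw [hz, ← min_add_add_right, add_assoc, add_assoc]

theorem covector_cell_tropically_convex_general (d n : ℕ) (v : Fin n → Fin d → T2i)
    (S : Set (Fin d × Fin n)) (p q : Fin d → T2)
    (hp : p ∈ cellC v S) (hq : q ∈ cellC v S)
    (l m : T2i)
    (z : Fin d → T2)
    (hz : ∀ i, (↑(z i) : T2i) = min (l + ↑(p i)) (m + ↑(q i))) :
    z ∈ cellC v S := by
  intro ij hij
  obtain ⟨hv, hps⟩ := hp hij
  exact ⟨hv, min_add_mem_sector hps (hq hij).2 l m hz⟩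

/-- Covector cells are rank two tropically convex: for `p, q ∈ C_S`
and `λ, μ ∈ T₂ ∪ {∞}` with `min(λ,μ) = (0,0)`, the point `min(λ+p, μ+q)` (which has
all coordinates finite) again lies in `C_S`. -/
theorem covector_cell_tropically_convex (d n : ℕ) (v : Fin n → Fin d → T2i)
    (S : Set (Fin d × Fin n)) (p q : Fin d → T2)
    (hp : p ∈ cellC v S) (hq : q ∈ cellC v S)
    (l m : T2i) (hlm : min l m = ((0 : T2) : T2i))
    (z : Fin d → T2)
    (hz : ∀ i, (↑(z i) : T2i) = min (l + ↑(p i)) (m + ↑(q i))) :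
    z ∈ cellC v S :=
  covector_cell_tropically_convex_general d n v S p q hp hq l m z hz
end
end

section
/- With the notation and hypotheses of the decomposition theorem for rank two tropical cones (K generated by V, rank one covector cells A_T of π_{u*}(K) in ℝ_t^d and B_S of π_{t*}(K_T) in ℝ_u^d), the closure of K ∩ (T₂)^d in the Euclidean topology on ℝ^{2d} is the finite union of ordinary polyhedra cl( K ∩ (T₂)^d ) = ⋃_S ⋃_{T ⊇ S} ( A_T + B_S ), where S runs over the bounded covectors of V and T over the covectors of π_{u*}(V) containing S. -/
noncomputable section
open scoped Classical

variable {d n : ℕ}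

/-- The ordinary polyhedron `A_T + B_S ⊆ ℝ_t^d × ℝ_u^d = ℝ^{2d}` (orthogonal
Minkowski sum), where `A_T` is the rank one covector cell of `π_{u*}(V)` labelled `T`
and `B_S` the rank one covector cell of `π_{t*}(V_T)` labelled `S`. -/
def coneBlock (v : Fin n → Fin d → T2i) (S T : Set (Fin d × Fin n)) :
    Set ((Fin d → ℝ) × (Fin d → ℝ)) :=
  {x | x.1 ∈ cell1C (genU v) T ∧ x.2 ∈ cell1C (genTB v T) S}

/-- The index condition: `S` is a bounded covector of `V`, and `T ⊇ S` is a covector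
of `π_{u*}(V)`. -/
def coneIdx (v : Fin n → Fin d → T2i) (S T : Set (Fin d × Fin n)) : Prop :=
  IsCovector v S ∧ BoundedGraph S ∧ IsCovector1 (genU v) T ∧ S ⊆ T


/-!
A point `p ∈ (T₂)^d` lies in `K` iff its covector `S_p` is bounded (take `λ_j = p_i - v^(j)_i`
for any `(i, j) ∈ S_p`). Write `p = (q, r)` and let `T` be the covector of `q` for `π_{u*}(V)`.
The order on `T₂` is lexicographic and the ties of `q` are exactly recorded by `T`, so `S_p` is
the covector of `r` for `π_{t*}(V_T)`; hence `K ∩ (T₂)^d` lies in the union of the closed blocks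
`A_T + B_S`. Conversely, if `T` is the covector of `q₀` and `(q, r) ∈ A_T + B_S`, then for
`0 < θ ≤ 1` every tie of `q + θ (q₀ - q)` is a tie of `q₀`, hence recorded by `T`, so
`(q + θ (q₀ - q), r)` lies in the image of `K`; letting `θ → 0` gives `(q, r)`.
-/

open Set Filter Topology

section Sector

variable {ι α : Type*} [AddCommGroup α] [LinearOrder α] [IsOrderedAddMonoid α]
  {u : ι → WithTop α} {p : ι → α} {i k : ι}

/-- `p` lies in the sector `i` of `u` iff `i` minimizes `u - p`, so it lies in the sector `k`
as well iff `k` attains the same minimum. -/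
theorem sector_tie_iff (hi_ne : u i ≠ ⊤) (hi : ∀ m, (↑(p m - p i) + u i : WithTop α) ≤ u m) :
    (u k ≠ ⊤ ∧ ∀ m, (↑(p m - p k) + u k : WithTop α) ≤ u m) ↔
      (↑(p k - p i) + u i : WithTop α) = u k := by
  constructor
  · rintro ⟨-, hk⟩
    refine le_antisymm (hi k) ?_
    calc u k = ↑(p k - p i) + (↑(p i - p k) + u k) := by
          rw [← add_assoc, ← WithTop.coe_add, sub_add_sub_cancel, sub_self, WithTop.coe_zero,
            zero_add]
      _ ≤ ↑(p k - p i) + u i := add_le_add_right (hk i) _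
  · intro h
    refine ⟨h ▸ WithTop.add_ne_top.2 ⟨WithTop.coe_ne_top, hi_ne⟩, fun m => ?_⟩
    rw [← h, ← add_assoc, ← WithTop.coe_add, sub_add_sub_cancel]
    exact hi m

end Sector

theorem mem_covector_iff_of_mem {v : Fin n → Fin d → T2i} {p : Fin d → T2} {i k : Fin d}
    {j : Fin n} (h : (i, j) ∈ covector v p) :
    (k, j) ∈ covector v p ↔ (↑(p k - p i) + v j i : T2i) = v j k :=
  sector_tie_iff h.1 h.2

theorem mem_covector1_iff_of_mem {u : Fin n → Fin d → WithTop ℝ} {q : Fin d → ℝ} {i k : Fin d}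
    {j : Fin n} (h : (i, j) ∈ covector1 u q) :
    (k, j) ∈ covector1 u q ↔ (↑(q k - q i) + u j i : WithTop ℝ) = u j k :=
  sector_tie_iff h.1 h.2

section Cone

variable {v : Fin n → Fin d → T2i} {p : Fin d → T2}

theorem exists_coeff_of_covector (j : Fin n) :
    ∃ l : T2i, (∀ k, (p k : T2i) ≤ l + v j k) ∧
      ∀ k, (k, j) ∈ covector v p → l + v j k = p k := by
  by_cases h : ∃ i, (i, j) ∈ covector v p
  · obtain ⟨i, hi⟩ := h
    obtain ⟨c, hc⟩ := WithTop.ne_top_iff_exists.1 hi.1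
    have hpk : ∀ k, (p k : T2i) = ↑(p i - c) + (↑(p k - p i) + v j i) := fun k => by
      rw [← hc, ← WithTop.coe_add, ← WithTop.coe_add]
      congr 1
      abel
    refine ⟨↑(p i - c), fun k => (hpk k).trans_le (add_le_add_right (hi.2 k) _), fun k hk => ?_⟩
    rw [hpk, (mem_covector_iff_of_mem hi).1 hk]
  · exact ⟨⊤, fun k => by simp, fun k hk => (h ⟨k, hk⟩).elim⟩

theorem mem_genConeFin_iff : p ∈ genConeFin v ↔ BoundedGraph (covector v p) := by
  constructor
  · rintro ⟨lam, hlam⟩ i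
    have hp : ∀ k, (p k : T2i) = Finset.univ.inf fun j => lam j + v j k :=
      fun k => congrFun hlam k
    have hn : (Finset.univ : Finset (Fin n)).Nonempty :=
      Finset.nonempty_iff_ne_empty.2 fun h => by simpa [h] using hp i
    obtain ⟨j, -, hj⟩ := Finset.exists_mem_eq_inf Finset.univ hn fun j => lam j + v j i
    have hpi : lam j + v j i = p i := (hp i ▸ hj).symm
    obtain ⟨hl, hv⟩ := WithTop.add_ne_top.1 (hpi ▸ WithTop.coe_ne_top)
    refine ⟨j, hv, fun k => ?_⟩
    rw [← WithTop.add_le_add_iff_left hl, add_left_comm, hpi, ← WithTop.coe_add, sub_add_cancel,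
      hp k]
    exact Finset.inf_le (Finset.mem_univ j)
  · intro hS
    choose lam hlam using @exists_coeff_of_covector _ _ v p
    refine ⟨lam, funext fun k => le_antisymm (Finset.le_inf fun j _ => (hlam j).1 k) ?_⟩
    obtain ⟨j, hj⟩ := hS k
    exact (Finset.inf_le (Finset.mem_univ j)).trans ((hlam j).2 k hj).le

end Cone

theorem projU2_coe_add (a : T2) (x : T2i) : projU2 (↑a + x) = ↑(ofLex a).1 + projU2 x := by
  cases x <;> rfl

theorem projT2_coe_add (a : T2) (x : T2i) : projT2 (↑a + x) = ↑(ofLex a).2 + projT2 x := by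
  cases x <;> rfl

theorem le_iff_projU2_projT2 (x y : T2i) :
    x ≤ y ↔ projU2 x ≤ projU2 y ∧ (projU2 x = projU2 y → projT2 x ≤ projT2 y) := by
  induction y using WithTop.recTopCoe with
  | top => simp [projU2, projT2]
  | coe b =>
    induction x using WithTop.recTopCoe with
    | top => simp [projU2, projT2]
    | coe a =>
      simp only [projU2, projT2, WithTop.map_coe, WithTop.coe_le_coe, WithTop.coe_eq_coe,
        Prod.Lex.le_iff]
      grind

theorem genU_eq_top_iff {v : Fin n → Fin d → T2i} {i : Fin d} {j : Fin n} :
    genU v j i = ⊤ ↔ v j i = ⊤ :=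
  WithTop.map_eq_top_iff

theorem genTB_of_mem {v : Fin n → Fin d → T2i} {T : Set (Fin d × Fin n)} {i : Fin d} {j : Fin n}
    (h : (i, j) ∈ T) : genTB v T j i = projT2 (v j i) := by
  simp [genTB, genRestrict, h]

theorem genTB_of_notMem {v : Fin n → Fin d → T2i} {T : Set (Fin d × Fin n)} {i : Fin d}
    {j : Fin n} (h : (i, j) ∉ T) : genTB v T j i = ⊤ := by
  simp [genTB, genRestrict, h, projT2]

/-- The equation says that `i` and `k` tie in `u^(j) - q`. -/
def IsTieClosed (u : Fin n → Fin d → WithTop ℝ) (T : Set (Fin d × Fin n)) (q : Fin d → ℝ) :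
    Prop :=
  ∀ ⦃i j k⦄, (i, j) ∈ T → (↑(q k - q i) + u j i : WithTop ℝ) = u j k → (k, j) ∈ T

theorem isTieClosed_covector1 {u : Fin n → Fin d → WithTop ℝ} (q : Fin d → ℝ) :
    IsTieClosed u (covector1 u q) q :=
  fun _ _ _ hij heq => (mem_covector1_iff_of_mem hij).2 heq

section Decomposition

variable {v : Fin n → Fin d → T2i} {p : Fin d → T2}

theorem covector_subset_covector1_genU : covector v p ⊆ covector1 (genU v) (embed2 p).1 := by
  rintro ⟨i, j⟩ ⟨hne, hsec⟩
  refine ⟨genU_eq_top_iff.not.2 hne, fun k => ?_⟩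
  have := ((le_iff_projU2_projT2 _ _).1 (hsec k)).1
  rwa [projU2_coe_add] at this

theorem covector_subset_covector1_genTB :
    covector v p ⊆ covector1 (genTB v (covector1 (genU v) (embed2 p).1)) (embed2 p).2 := by
  rintro ⟨i, j⟩ h
  have hiT := covector_subset_covector1_genU h
  refine ⟨by simpa [genTB_of_mem hiT, projT2] using h.1, fun k => ?_⟩
  by_cases hkT : (k, j) ∈ covector1 (genU v) (embed2 p).1
  · have htie := (mem_covector1_iff_of_mem hiT).1 hkT
    have := ((le_iff_projU2_projT2 _ _).1 (h.2 k)).2 (by rw [projU2_coe_add]; exact htie)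
    rwa [projT2_coe_add, ← genTB_of_mem hiT, ← genTB_of_mem hkT] at this
  · simp [genTB_of_notMem hkT]

theorem covector1_genTB_subset_covector {T : Set (Fin d × Fin n)}
    (hT : T ⊆ covector1 (genU v) (embed2 p).1) (htie : IsTieClosed (genU v) T (embed2 p).1) :
    covector1 (genTB v T) (embed2 p).2 ⊆ covector v p := by
  rintro ⟨i, j⟩ ⟨hne, hsec⟩
  have hiT : (i, j) ∈ T := by_contra fun h => hne (genTB_of_notMem h)
  refine ⟨genU_eq_top_iff.not.1 (hT hiT).1, fun k => ?_⟩
  rw [le_iff_projU2_projT2, projU2_coe_add, projT2_coe_add]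
  refine ⟨(hT hiT).2 k, fun heq => ?_⟩
  have := hsec k
  rwa [genTB_of_mem hiT, genTB_of_mem (htie hiT heq)] at this

end Decomposition

theorem isLowerSet_setOf_coe_add_le (c c' : WithTop ℝ) : IsLowerSet {t : ℝ | ↑t + c ≤ c'} :=
  fun _ _ hts ht => (add_le_add_left (WithTop.coe_le_coe.2 hts) c).trans ht

theorem isClosed_setOf_coe_add_le (c c' : WithTop ℝ) : IsClosed {t : ℝ | ↑t + c ≤ c'} := by
  induction c' using WithTop.recTopCoe with
  | top => simp
  | coe b =>
    induction c using WithTop.recTopCoe with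
    | top => simp
    | coe a =>
      simp only [← WithTop.coe_add, WithTop.coe_le_coe]
      exact isClosed_le (by fun_prop) continuous_const

theorem sector1_eq_iInter (w : Fin d → WithTop ℝ) (i : Fin d) :
    sector1 w i = ⋂ k, (fun q : Fin d → ℝ => q k - q i) ⁻¹' {t | ↑t + w i ≤ w k} := by
  ext q
  simp [sector1]

theorem convex_sector1 (w : Fin d → WithTop ℝ) (i : Fin d) : Convex ℝ (sector1 w i) := by
  rw [sector1_eq_iInter]
  exact convex_iInter fun k =>
    (isLowerSet_setOf_coe_add_le _ _).ordConnected.convex.is_linear_preimage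
      (LinearMap.proj (R := ℝ) (φ := fun _ : Fin d => ℝ) k - LinearMap.proj i).isLinear

theorem isClosed_sector1 (w : Fin d → WithTop ℝ) (i : Fin d) : IsClosed (sector1 w i) := by
  rw [sector1_eq_iInter]
  exact isClosed_iInter fun k => (isClosed_setOf_coe_add_le _ _).preimage (by fun_prop)

theorem convex_cell1C (u : Fin n → Fin d → WithTop ℝ) (S : Set (Fin d × Fin n)) :
    Convex ℝ (cell1C u S) :=
  fun _ hx _ hy _ _ ha hb hab _ hij =>
    ⟨(hx hij).1, convex_sector1 _ _ (hx hij).2 (hy hij).2 ha hb hab⟩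

theorem isClosed_cell1C (u : Fin n → Fin d → WithTop ℝ) (S : Set (Fin d × Fin n)) :
    IsClosed (cell1C u S) := by
  have : cell1C u S = ⋂ ij ∈ S, {_q | u ij.2 ij.1 ≠ ⊤} ∩ sector1 (u ij.2) ij.1 := by
    ext q
    simp [cell1C, covector1, Set.subset_def]
  rw [this]
  exact isClosed_biInter fun _ _ => isClosed_const.inter (isClosed_sector1 _ _)

/-- A tie at an interior point of the segment from `q` to `q₀` is a tie at both endpoints,
since the defining inequalities hold at both of them. -/
theorem IsTieClosed.segment {u : Fin n → Fin d → WithTop ℝ} {T : Set (Fin d × Fin n)}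
    {q q₀ : Fin d → ℝ} {θ : ℝ}
    (htie : IsTieClosed u T q₀) (hq : q ∈ cell1C u T) (hq₀ : q₀ ∈ cell1C u T)
    (hθ₀ : 0 < θ) (hθ₁ : θ ≤ 1) : IsTieClosed u T ((1 - θ) • q + θ • q₀) := by
  set qθ := (1 - θ) • q + θ • q₀
  intro i j k hij heq
  obtain ⟨a, ha⟩ := WithTop.ne_top_iff_exists.1 (hq hij).1
  rw [← ha, ← WithTop.coe_add] at heq
  have hle : ∀ q' ∈ cell1C u T, q' k - q' i + a ≤ qθ k - qθ i + a := by
    intro q' hq'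
    have := (hq' hij).2 k
    rwa [← ha, ← heq, ← WithTop.coe_add, WithTop.coe_le_coe] at this
  refine htie hij ?_
  rw [← ha, ← heq, ← WithTop.coe_add, WithTop.coe_inj]
  have h := hle q hq
  have h₀ := hle q₀ hq₀
  simp only [qθ, Pi.add_apply, Pi.smul_apply, smul_eq_mul] at h h₀ ⊢
  nlinarith

theorem coneBlock_subset_closure {v : Fin n → Fin d → T2i} {S T : Set (Fin d × Fin n)}
    (hS : BoundedGraph S) (hT : IsCovector1 (genU v) T) :
    coneBlock v S T ⊆ closure (embed2 '' genConeFin v) := by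
  obtain ⟨q₀, rfl⟩ := hT
  rintro ⟨q, r⟩ ⟨hq, hr⟩
  let path : ℝ → (Fin d → ℝ) × (Fin d → ℝ) := fun θ => ((1 - θ) • q + θ • q₀, r)
  have hlim : Tendsto path (𝓝[>] 0) (𝓝 (q, r)) := by
    have : ContinuousWithinAt path (Ioi 0) 0 := by fun_prop
    simpa [path] using this.tendsto
  refine mem_closure_of_tendsto hlim (mem_of_superset (Ioc_mem_nhdsGT one_pos) ?_)
  rintro θ ⟨hθ₀, hθ₁⟩
  have hqθ : (path θ).1 ∈ cell1C (genU v) (covector1 (genU v) q₀) :=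
    convex_cell1C _ _ hq (fun _ h => h) (by linarith) hθ₀.le (by ring)
  have htie := (isTieClosed_covector1 q₀).segment hq (fun _ h => h) hθ₀ hθ₁
  exact ⟨fun i => toLex ((path θ).1 i, (path θ).2 i), mem_genConeFin_iff.2 fun i =>
    (hS i).imp fun _ hj => covector1_genTB_subset_covector hqθ htie (hr hj), rfl⟩

/-- The closure of `K ∩ (T₂)^d` in the Euclidean topology on
`ℝ^{2d}` is the finite union of ordinary polyhedra
`cl(K ∩ (T₂)^d) = ⋃_S ⋃_{T ⊇ S} (A_T + B_S)` over bounded covectors `S` of `V` and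
covectors `T ⊇ S` of `π_{u*}(V)`. -/
theorem cone_closure (d n : ℕ) (v : Fin n → Fin d → T2i) :
    closure (embed2 '' genConeFin v) =
      ⋃ S : Set (Fin d × Fin n), ⋃ T : Set (Fin d × Fin n),
        ⋃ (_ : coneIdx v S T), coneBlock v S T := by
  refine (closure_minimal ?_ ?_).antisymm ?_
  · rintro _ ⟨p, hp, rfl⟩
    simp only [Set.mem_iUnion]
    exact ⟨covector v p, _, ⟨⟨p, rfl⟩, mem_genConeFin_iff.1 hp, ⟨_, rfl⟩,
      covector_subset_covector1_genU⟩, fun _ h => h, covector_subset_covector1_genTB⟩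
  · exact isClosed_iUnion_of_finite fun S => isClosed_iUnion_of_finite fun T =>
      isClosed_iUnion_of_finite fun _ => (isClosed_cell1C _ _).prod (isClosed_cell1C _ _)
  · exact iUnion_subset fun S => iUnion_subset fun T => iUnion_subset fun h =>
      coneBlock_subset_closure h.2.1 h.2.2.1
end
end
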